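/- Let t ∈ (0,∞) and define J_Me(c;t) = (1−c)( log((1−c)t) − (1−c)t/2 ) + t/2 − log t for c ∈ [0,1], with the convention that the summand (1−c)( log((1−c)t) − (1−c)t/2 ) equals 0 when c = 1. Then J_Me(0;t) = 0, the function c ↦ J_Me(c;t) is strictly increasing on [0,1], and in particular J_Me(c;t) > 0 for every c ∈ (0,1]. -/

import Mathlib

/-- The mesoscopic rate function `J_Me(c;t)`. -/
noncomputable def JMe (t c : ℝ) : ℝ :=
  (1 - c) * (Real.log ((1 - c) * t) - (1 - c) * t / 2) + t / 2 - Real.log t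

private lemma glue_strictMonoOn {f : ℝ → ℝ} {a m b : ℝ}
    (h1 : StrictMonoOn f (Set.Icc a m)) (h2 : StrictMonoOn f (Set.Icc m b))
    (ham : a ≤ m) (hmb : m ≤ b) : StrictMonoOn f (Set.Icc a b) := by
  intro x hx y hy hxy
  simp only [Set.mem_Icc] at hx hy
  rcases le_total y m with h | h
  · exact h1 ⟨hx.1, le_trans hxy.le h⟩ ⟨hy.1, h⟩ hxy
  · rcases le_total m x with h' | h'
    · exact h2 ⟨h', hx.2⟩ ⟨h, hy.2⟩ hxy
    · rcases eq_or_lt_of_le h' with rfl | h'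
      · exact h2 ⟨le_refl _, hx.2⟩ ⟨h, hy.2⟩ hxy
      · rcases eq_or_lt_of_le h with rfl | h
        · exact h1 ⟨hx.1, h'.le⟩ ⟨ham, le_refl _⟩ h'
        · exact lt_trans (h1 ⟨hx.1, h'.le⟩ ⟨ham, le_refl _⟩ h')
            (h2 ⟨le_refl _, hmb⟩ ⟨h.le, hy.2⟩ h)

private lemma JMe_eq (t : ℝ) (ht : 0 < t) : JMe t = fun c =>
    (1 - c) * Real.log (1 - c) +
      ((1 - c) * Real.log t - (1 - c) ^ 2 * t / 2 + t / 2 - Real.log t) := by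
  funext c
  unfold JMe
  by_cases hc : c = 1
  · simp [hc]
  · rw [Real.log_mul (sub_ne_zero.mpr (Ne.symm hc)) ht.ne']
    ring

private lemma JMe_hasDerivAt (t : ℝ) (ht : 0 < t) {c : ℝ} (hc : c < 1) :
    HasDerivAt (JMe t) ((1 - c) * t - 1 - Real.log ((1 - c) * t)) c := by
  have h1c : (0 : ℝ) < 1 - c := by linarith
  have hxt : (0 : ℝ) < (1 - c) * t := mul_pos h1c ht
  have h1 : HasDerivAt (fun c : ℝ => 1 - c) (-1) c := by
    simpa using (hasDerivAt_id' c).const_sub (1 : ℝ)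
  have hlog : HasDerivAt (fun c : ℝ => Real.log ((1 - c) * t))
      ((-1 * t) / ((1 - c) * t)) c := (h1.mul_const t).log hxt.ne'
  have h := ((h1.mul (hlog.sub ((h1.mul_const t).div_const 2))).add_const
    (t / 2)).sub_const (Real.log t)
  convert h using 1
  · rfl
  · rfl
  · rfl
  simp only [Pi.sub_apply]
  field_simp
  ring

/-- `J_Me(0;t) = 0`, `J_Me(·;t)` is strictly increasing on `[0,1]`, and `J_Me(c;t) > 0` for
`c ∈ (0,1]`. -/
theorem JMe_strictMono (t : ℝ) (ht : 0 < t) :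
    JMe t 0 = 0 ∧ StrictMonoOn (JMe t) (Set.Icc 0 1) ∧
      ∀ c ∈ Set.Ioc (0 : ℝ) 1, 0 < JMe t c := by
  have h0 : JMe t 0 = 0 := by unfold JMe; ring
  have hcont : ContinuousOn (JMe t) (Set.Icc (0:ℝ) 1) := by
    rw [JMe_eq t ht]
    apply Continuous.continuousOn
    exact (Real.continuous_mul_log.comp (by continuity)).add (by continuity)
  -- positivity of the derivative off x = 1
  have hdpos : ∀ c : ℝ, c < 1 → (1 - c) * t ≠ 1 →
      0 < (1 - c) * t - 1 - Real.log ((1 - c) * t) := by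
    intro c hc hne
    have h1c : (0 : ℝ) < 1 - c := by linarith
    have hxt : (0 : ℝ) < (1 - c) * t := mul_pos h1c ht
    have := Real.log_lt_sub_one_of_pos hxt hne
    linarith
  have hderiv : ∀ c : ℝ, c < 1 → (1 - c) * t ≠ 1 → 0 < deriv (JMe t) c := by
    intro c hc hne
    rw [(JMe_hasDerivAt t ht hc).deriv]
    exact hdpos c hc hne
  have hmono : StrictMonoOn (JMe t) (Set.Icc 0 1) := by
    rcases le_or_gt t 1 with h | h
    · apply strictMonoOn_of_deriv_pos (convex_Icc 0 1) hcont
      intro c hc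
      rw [interior_Icc, Set.mem_Ioo] at hc
      refine hderiv c hc.2 (ne_of_lt ?_)
      calc (1 - c) * t < 1 * t := by nlinarith
        _ ≤ 1 := by linarith
    · -- t > 1, split at c0 = 1 - 1/t
      set c0 : ℝ := 1 - 1 / t with hc0
      have ht1 : (0 : ℝ) < 1 / t := by positivity
      have ht2 : 1 / t < 1 := by rw [div_lt_one ht]; exact h
      have hc01 : 0 < c0 ∧ c0 < 1 := ⟨by rw [hc0]; linarith, by rw [hc0]; linarith⟩
      have hA : StrictMonoOn (JMe t) (Set.Icc 0 c0) := by
        apply strictMonoOn_of_deriv_pos (convex_Icc 0 c0)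
          (hcont.mono (Set.Icc_subset_Icc le_rfl hc01.2.le))
        intro c hc
        rw [interior_Icc, Set.mem_Ioo] at hc
        refine hderiv c (lt_trans hc.2 hc01.2) (ne_of_gt ?_)
        have : 1 / t < 1 - c := by rw [hc0] at hc; linarith [hc.2]
        calc (1 : ℝ) = (1 / t) * t := by field_simp
          _ < (1 - c) * t := by nlinarith
      have hB : StrictMonoOn (JMe t) (Set.Icc c0 1) := by
        apply strictMonoOn_of_deriv_pos (convex_Icc c0 1)
          (hcont.mono (Set.Icc_subset_Icc hc01.1.le le_rfl))
        intro c hc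
        rw [interior_Icc, Set.mem_Ioo] at hc
        refine hderiv c hc.2 (ne_of_lt ?_)
        have : 1 - c < 1 / t := by rw [hc0] at hc; linarith [hc.1]
        calc (1 - c) * t < (1 / t) * t := by nlinarith
          _ = 1 := by field_simp
      exact glue_strictMonoOn hA hB hc01.1.le hc01.2.le
  refine ⟨h0, hmono, fun c hc => ?_⟩
  rw [← h0]
  exact hmono ⟨le_refl 0, zero_le_one⟩ ⟨hc.1.le, hc.2⟩ hc.1
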